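/- arXiv:1109.2367 — 3 statements merged into one kernel-verified Lean document; each statement's English description precedes it below -/
import Mathlib

section
/- Let R be a commutative ring and x : ℕ → R. With p_{l;n}^{(m)} defined for l ≥ 1 as p_{l;n}^{(m)} = Σ_{r=0}^{n} (−1)^r C(n,r) Σ_{a₁+⋯+a_m = r+l, aᵢ ≥ 1} x_{a₁}⋯x_{a_m}, the following recurrence holds for all m ≥ 2, l ≥ 1, n ≥ 1: p_{l;n}^{(m)} = Σ_{t=1}^{l−1} p_{t;0}^{(m−1)} · p_{l−t;n}^{(1)} − Σ_{k=0}^{n−1} p_{1;k}^{(1)} · p_{l;n−k−1}^{(m−1)}. -/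
/-!
Write `c_m(N)` for `compSum x m N` and `D f (l) = f l - f (l + 1)`, so that
`p_{l;n}^{(m)} = (Dⁿ c_m)(l)` (`altBinomSum`), i.e. `(-1)ⁿ` times the `n`-th forward
difference. Splitting off the first part of a composition gives `c_m = c_{m-1} ⋆ c_1`, where
`(a ⋆ b)(l) = ∑_{0<t<l} a t * b (l - t)` (`posConv`). For `l ≥ 1` the operator `D` obeys the
twisted Leibniz rule `D(a ⋆ b)(l) = (a ⋆ D b)(l) - a l * b 1`; iterating it `n` times gives the
recurrence.
-/

/-- Sum over all compositions `(a₁,…,a_m)` of `N` into `m` positive parts of the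
monomials `x_{a₁}⋯x_{a_m}`. -/
noncomputable def compSum {R : Type*} [CommRing R] (x : ℕ → R) (m N : ℕ) : R :=
  ∑ a ∈ (Finset.Nat.antidiagonalTuple m N).filter (fun a => ∀ i, 1 ≤ a i),
    ∏ i, x (a i)

/-- `p_{l;n}^{(m)} = Σ_{r=0}^{n} (−1)^r C(n,r) Σ_{a₁+⋯+a_m=r+l, aᵢ≥1} x_{a₁}⋯x_{a_m}`. -/
noncomputable def pP {R : Type*} [CommRing R] (x : ℕ → R) (l n m : ℕ) : R :=
  ∑ r ∈ Finset.range (n + 1), (-1 : R) ^ r * (n.choose r : R) * compSum x m (r + l)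

open Finset

theorem Finset.Nat.sum_antidiagonalTuple_succ {M : Type*} [AddCommMonoid M] (k n : ℕ)
    (f : (Fin (k + 1) → ℕ) → M) :
    ∑ a ∈ Nat.antidiagonalTuple (k + 1) n, f a =
      ∑ ij ∈ antidiagonal n, ∑ a ∈ Nat.antidiagonalTuple k ij.2, f (Fin.cons ij.1 a) := by
  simp only [Finset.sum]
  rw [show (antidiagonal n).val = (List.Nat.antidiagonal n : Multiset (ℕ × ℕ)) from rfl]
  simp [Nat.antidiagonalTuple, Multiset.Nat.antidiagonalTuple, List.Nat.antidiagonalTuple,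
    List.flatMap, List.sum_flatten, Function.comp_def]

section

variable {R : Type*} [CommRing R]

section compSum

variable (x : ℕ → R)

lemma compSum_eq_sum_ite (m N : ℕ) :
    compSum x m N =
      ∑ a ∈ Nat.antidiagonalTuple m N, if ∀ i, 1 ≤ a i then ∏ i, x (a i) else 0 :=
  sum_filter _ _

lemma compSum_one (N : ℕ) : compSum x 1 N = if 1 ≤ N then x N else 0 := by
  simp [compSum_eq_sum_ite]

lemma compSum_zero_right {m : ℕ} (hm : m ≠ 0) : compSum x m 0 = 0 := by
  simp only [compSum_eq_sum_ite, Nat.antidiagonalTuple_zero_right, sum_singleton, Pi.zero_apply]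
  exact if_neg fun h => by simpa using h ⟨0, Nat.pos_of_ne_zero hm⟩

lemma compSum_succ (m N : ℕ) :
    compSum x (m + 1) N =
      ∑ ij ∈ antidiagonal N, compSum x 1 ij.1 * compSum x m ij.2 := by
  rw [compSum_eq_sum_ite, Nat.sum_antidiagonalTuple_succ]
  refine sum_congr rfl fun ij _ => ?_
  rw [compSum_one, compSum_eq_sum_ite, mul_sum]
  refine sum_congr rfl fun a _ => ?_
  simp only [Fin.forall_fin_succ, Fin.cons_zero, Fin.cons_succ, Fin.prod_univ_succ,
    ite_zero_mul_ite_zero]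

end compSum

def posConv (a b : ℕ → R) (l : ℕ) : R :=
  ∑ t ∈ Ico 1 l, a t * b (l - t)

lemma compSum_succ_eq_posConv (x : ℕ → R) {m : ℕ} (hm : m ≠ 0) :
    compSum x (m + 1) = posConv (compSum x m) (compSum x 1) := by
  funext N
  rw [compSum_succ, ← Nat.sum_antidiagonal_swap, Nat.sum_antidiagonal_eq_sum_range_succ_mk,
    posConv]
  simp only [Prod.swap, mul_comm (compSum x 1 _)]
  refine (sum_subset (fun t ht => ?_) fun t ht hnt => ?_).symm
  · simp only [mem_Ico, mem_range] at ht ⊢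
    omega
  · obtain rfl | rfl : t = 0 ∨ t = N := by simp only [mem_Ico, mem_range] at ht hnt; omega
    · simp [compSum_zero_right x hm]
    · simp [compSum_one]

lemma posConv_sub_posConv_succ (a b : ℕ → R) {l : ℕ} (hl : 1 ≤ l) :
    posConv a b l - posConv a b (l + 1) =
      posConv a (fun j => b j - b (j + 1)) l - a l * b 1 := by
  have hshift : ∑ t ∈ Ico 1 l, a t * b (l + 1 - t) = ∑ t ∈ Ico 1 l, a t * b (l - t + 1) :=
    sum_congr rfl fun t ht => by rw [Nat.sub_add_comm (mem_Ico.1 ht).2.le]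
  simp only [posConv, sum_Ico_succ_top hl, Nat.add_sub_cancel_left, hshift, mul_sub,
    sum_sub_distrib]
  ring

def altBinomSum (f : ℕ → R) (n l : ℕ) : R :=
  ∑ r ∈ range (n + 1), (-1) ^ r * (n.choose r : R) * f (r + l)

lemma altBinomSum_eq_fwdDiff_iter (f : ℕ → R) (n l : ℕ) :
    altBinomSum f n l = (-1) ^ n * (fwdDiff 1)^[n] f l := by
  rw [altBinomSum, fwdDiff_iter_eq_sum_shift, mul_sum]
  refine sum_congr rfl fun r hr => ?_
  obtain ⟨d, rfl⟩ := Nat.exists_eq_add_of_le (mem_range_succ_iff.1 hr)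
  have hsq : ((-1 : R) ^ d) * (-1) ^ d = 1 := by rw [← pow_add, ← two_mul, pow_mul]; simp
  simp only [Nat.add_sub_cancel_left, zsmul_eq_mul, Int.cast_mul, Int.cast_pow, Int.cast_neg,
    Int.cast_one, Int.cast_natCast, smul_eq_mul, mul_one, pow_add, add_comm l r]
  linear_combination -(-1) ^ r * (((r + d).choose r : ℕ) : R) * f (r + l) * hsq

lemma pP_eq_altBinomSum (x : ℕ → R) (l n m : ℕ) :
    pP x l n m = altBinomSum (compSum x m) n l :=
  rfl

lemma altBinomSum_zero (f : ℕ → R) : altBinomSum f 0 = f := by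
  funext l
  simp [altBinomSum]

lemma altBinomSum_succ (f : ℕ → R) (n l : ℕ) :
    altBinomSum f (n + 1) l = altBinomSum f n l - altBinomSum f n (l + 1) := by
  simp only [altBinomSum_eq_fwdDiff_iter, Function.iterate_succ_apply', fwdDiff, pow_succ]
  ring

theorem altBinomSum_posConv (a b : ℕ → R) (n : ℕ) {l : ℕ} (hl : 1 ≤ l) :
    altBinomSum (posConv a b) n l =
      posConv a (altBinomSum b n) l -
        ∑ k ∈ range n, altBinomSum b k 1 * altBinomSum a (n - k - 1) l := by
  induction n generalizing l with
  | zero => simp [altBinomSum_zero]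
  | succ n ih =>
    have hcorr : ∀ l, ∑ k ∈ range (n + 1), altBinomSum b k 1 * altBinomSum a (n + 1 - k - 1) l =
        (∑ k ∈ range n, altBinomSum b k 1 * altBinomSum a (n - k - 1) l) -
          (∑ k ∈ range n, altBinomSum b k 1 * altBinomSum a (n - k - 1) (l + 1)) +
          altBinomSum b n 1 * a l := by
      intro l
      rw [sum_range_succ, Nat.add_sub_cancel_left, Nat.sub_self, altBinomSum_zero,
        ← sum_sub_distrib]
      congr 1
      refine sum_congr rfl fun k hk => ?_
      rw [show n + 1 - k - 1 = n - k - 1 + 1 by have := mem_range.1 hk; omega, altBinomSum_succ]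
      ring
    have hstep := posConv_sub_posConv_succ a (altBinomSum b n) hl
    simp only [← altBinomSum_succ] at hstep
    rw [altBinomSum_succ, ih hl, ih (by omega : 1 ≤ l + 1), hcorr]
    linear_combination hstep

end

theorem stmt6_general (R : Type*) [CommRing R] (x : ℕ → R) (m l n : ℕ)
    (hm : 2 ≤ m) (hl : 1 ≤ l) :
    pP x l n m =
      (∑ t ∈ Finset.Icc 1 (l - 1), pP x t 0 (m - 1) * pP x (l - t) n 1) -
        ∑ k ∈ Finset.range n, pP x 1 k 1 * pP x l (n - k - 1) (m - 1) := by
  have hconv : compSum x m = posConv (compSum x (m - 1)) (compSum x 1) := by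
    rw [← compSum_succ_eq_posConv x (by omega : m - 1 ≠ 0), Nat.sub_add_cancel (by omega)]
  simp only [pP_eq_altBinomSum, altBinomSum_zero, hconv,
    Icc_sub_one_right_eq_Ico_of_not_isMin (show ¬IsMin l by simpa using (by omega : l ≠ 0))]
  exact altBinomSum_posConv _ _ n hl

theorem stmt6 (R : Type*) [CommRing R] (x : ℕ → R) (m l n : ℕ)
    (hm : 2 ≤ m) (hl : 1 ≤ l) (hn : 1 ≤ n) :
    pP x l n m =
      (∑ t ∈ Finset.Icc 1 (l - 1), pP x t 0 (m - 1) * pP x (l - t) n 1) -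
        ∑ k ∈ Finset.range n, pP x 1 k 1 * pP x l (n - k - 1) (m - 1) :=
  stmt6_general R x m l n hm hl
end

section
/- Let A be a bialgebra over a commutative ring R with coproduct Δ, let c ∈ R, and let e, f, t ∈ A with Δ(e) = e⊗1 + 1⊗e, Δ(f) = f⊗1 + 1⊗f, and Δ(t) = t⊗1 + 1⊗t − c·(f⊗e). Then for every k ≥ 1, the iterated coproduct Δ^{(k)} : A → A^{⊗k} satisfies Δ^{(k)}(t) = Σ_{a=1}^{k} t^{(a)} − c·Σ_{1 ≤ a < b ≤ k} f^{(a)}·e^{(b)}, where x^{(a)} = 1^{⊗(a−1)} ⊗ x ⊗ 1^{⊗(k−a)}. -/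
open scoped TensorProduct
open PiTensorProduct

section

variable (R A : Type*) [CommRing R] [Ring A] [Algebra R A]

/-- The linear map `A ⊗ A^{⊗n} → A^{⊗(n+1)}`, `a ⊗ (x₁ ⊗ ⋯ ⊗ xₙ) ↦ a ⊗ x₁ ⊗ ⋯ ⊗ xₙ`. -/
noncomputable def consStep (n : ℕ) :
    A ⊗[R] (⨂[R] (_ : Fin n), A) →ₗ[R] ⨂[R] (_ : Fin (n + 1)), A :=
  TensorProduct.lift <|
    (PiTensorProduct.lift :
        MultilinearMap R (fun _ : Fin n => A) (⨂[R] (_ : Fin (n + 1)), A) ≃ₗ[R] _).toLinearMap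
      ∘ₗ MultilinearMap.curryLeft
          (PiTensorProduct.tprod R (s := fun _ : Fin (n + 1) => A))

/-- `x^{(a)} = 1 ⊗ ⋯ ⊗ x ⊗ ⋯ ⊗ 1 ∈ A^{⊗k}` with `x` in the `a`-th slot. -/
noncomputable def ins (k : ℕ) (a : Fin k) (x : A) : ⨂[R] (_ : Fin k), A :=
  tprod R fun i => if i = a then x else 1

end

section

variable (R A : Type*) [CommRing R] [Ring A] [Bialgebra R A]

/-- The iterated coproduct `Δ^{(k+1)} : A → A^{⊗(k+1)}`; here `iterComul 0 = Δ^{(1)}` is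
the canonical identification `A ≅ A^{⊗1}` and
`iterComul (k+1) = (id ⊗ Δ^{(k+1)}) ∘ Δ` (by coassociativity any placement gives the
same map). -/
noncomputable def iterComul : (k : ℕ) → (A →ₗ[R] ⨂[R] (_ : Fin (k + 1)), A)
  | 0 => consStep R A 0 ∘ₗ
      (TensorProduct.mk R A (⨂[R] (_ : Fin 0), A)).flip (tprod R fun _ : Fin 0 => (1 : A))
  | (k + 1) => consStep R A (k + 1) ∘ₗ LinearMap.lTensor A (iterComul k) ∘ₗ
      Coalgebra.comul (R := R)

end

/-!
Since `Δ^{(k+2)} = (id ⊗ Δ^{(k+1)}) ∘ Δ`, one inducts on `k`. The map `A ⊗ A^{⊗n} → A^{⊗(n+1)}`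
is multiplicative on tensors of products, so it sends `1 ⊗ x^{(a)}` to `x^{(a+1)}` and
`f ⊗ e^{(b)}` to `f^{(1)} e^{(b+1)}`. Applying `id ⊗ Δ^{(k+1)}` to
`Δ t = t ⊗ 1 + 1 ⊗ t - c • f ⊗ e`, the first two terms give `t^{(1)}` and the shifted formula
for `k + 1` factors, while the last one, with `Δ^{(k+1)} e = ∑ e^{(b)}` for the primitive `e`,
supplies exactly the new pairs `(1, b + 1)`.
-/

lemma Fin.cons_mul_cons {α : Type*} [Mul α] {n : ℕ} (x y : α) (v w : Fin n → α) :
    (Fin.cons x v : Fin (n + 1) → α) * Fin.cons y w = Fin.cons (x * y) (v * w) := by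
  ext i
  cases i using Fin.cases <;> rfl

lemma Fin.sum_filter_lt_succ {M : Type*} [AddCommMonoid M] (n : ℕ)
    (F : Fin (n + 2) → Fin (n + 2) → M) :
    ∑ p ∈ Finset.univ.filter (fun p : Fin (n + 2) × Fin (n + 2) => p.1 < p.2), F p.1 p.2 =
      ∑ b : Fin (n + 1), F 0 b.succ +
        ∑ p ∈ Finset.univ.filter (fun p : Fin (n + 1) × Fin (n + 1) => p.1 < p.2),
          F p.1.succ p.2.succ := by
  simp only [Finset.sum_filter, Fintype.sum_prod_type, Fin.sum_univ_succ (n := n + 1),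
    Fin.succ_pos, Fin.not_lt_zero, Fin.succ_lt_succ_iff, if_true, if_false, zero_add]

section

variable {R A : Type*} [CommRing R] [Ring A] [Algebra R A]

@[simp]
lemma consStep_tmul_tprod (n : ℕ) (a : A) (m : Fin n → A) :
    consStep R A n (a ⊗ₜ[R] tprod R m) = PiTensorProduct.tprod R (Fin.cons a m) := by
  simp [consStep]

lemma consStep_tmul_one (n : ℕ) (x : A) :
    consStep R A n (x ⊗ₜ[R] 1) = ins R A (n + 1) 0 x := by
  rw [PiTensorProduct.one_def, consStep_tmul_tprod, ins]
  congr 1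
  funext i
  cases i using Fin.cases <;> simp [Fin.succ_ne_zero]

lemma consStep_one_tmul_ins (n : ℕ) (a : Fin n) (x : A) :
    consStep R A n (1 ⊗ₜ[R] ins R A n a x) = ins R A (n + 1) a.succ x := by
  rw [ins, consStep_tmul_tprod, ins]
  congr 1
  funext i
  cases i using Fin.cases <;> simp [(Fin.succ_ne_zero _).symm]

lemma consStep_mul_tmul_mul (n : ℕ) (a b : A) (u v : ⨂[R] (_ : Fin n), A) :
    consStep R A n ((a * b) ⊗ₜ[R] (u * v)) =
      consStep R A n (a ⊗ₜ[R] u) * consStep R A n (b ⊗ₜ[R] v) := by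
  induction u using PiTensorProduct.induction_on with
  | smul_tprod r m =>
    induction v using PiTensorProduct.induction_on with
    | smul_tprod s m' =>
      simp only [smul_mul_smul_comm, TensorProduct.tmul_smul, map_smul, consStep_tmul_tprod,
        tprod_mul_tprod, Fin.cons_mul_cons]
    | add v v' hv hv' => simp only [mul_add, TensorProduct.tmul_add, map_add, hv, hv']
  | add u u' hu hu' => simp only [add_mul, TensorProduct.tmul_add, map_add, hu, hu']

lemma consStep_one_tmul_mul (n : ℕ) (u v : ⨂[R] (_ : Fin n), A) :
    consStep R A n (1 ⊗ₜ[R] (u * v)) =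
      consStep R A n (1 ⊗ₜ[R] u) * consStep R A n (1 ⊗ₜ[R] v) := by
  simpa only [mul_one] using consStep_mul_tmul_mul n (1 : A) 1 u v

lemma consStep_tmul_ins (n : ℕ) (b : Fin n) (x y : A) :
    consStep R A n (x ⊗ₜ[R] ins R A n b y) = ins R A (n + 1) 0 x * ins R A (n + 1) b.succ y := by
  simpa only [mul_one, one_mul, consStep_tmul_one, consStep_one_tmul_ins] using
    consStep_mul_tmul_mul n x 1 1 (ins R A n b y)

end

section

variable {R A : Type*} [CommRing R] [Ring A] [Bialgebra R A]

lemma iterComul_zero_apply (x : A) : iterComul R A 0 x = ins R A 1 0 x := by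
  rw [ins, iterComul, LinearMap.comp_apply, LinearMap.flip_apply, TensorProduct.mk_apply,
    consStep_tmul_tprod]
  congr 1
  funext i
  cases i using Fin.cases with
  | zero => rfl
  | succ i => exact i.elim0

lemma iterComul_succ_apply (k : ℕ) (x : A) :
    iterComul R A (k + 1) x =
      consStep R A (k + 1) (LinearMap.lTensor A (iterComul R A k) (Coalgebra.comul (R := R) x)) :=
  rfl

lemma iterComul_one (k : ℕ) : iterComul R A k 1 = 1 := by
  induction k with
  | zero =>
    rw [iterComul_zero_apply, ins, PiTensorProduct.one_def]
    congr 1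
    funext i
    simp
  | succ k ih =>
    rw [iterComul_succ_apply, Bialgebra.comul_one, Algebra.TensorProduct.one_def,
      LinearMap.lTensor_tmul, ih, PiTensorProduct.one_def, consStep_tmul_tprod,
      PiTensorProduct.one_def]
    congr 1
    funext i
    cases i using Fin.cases <;> rfl

lemma iterComul_of_comul_eq_primitive {x : A}
    (hx : Coalgebra.comul (R := R) x = x ⊗ₜ[R] 1 + 1 ⊗ₜ[R] x) (k : ℕ) :
    iterComul R A k x = ∑ a : Fin (k + 1), ins R A (k + 1) a x := by
  induction k with
  | zero => rw [iterComul_zero_apply, Fin.sum_univ_one]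
  | succ k ih =>
    rw [iterComul_succ_apply, hx, map_add, LinearMap.lTensor_tmul, LinearMap.lTensor_tmul,
      iterComul_one, ih, map_add, consStep_tmul_one, TensorProduct.tmul_sum, map_sum,
      Fin.sum_univ_succ (f := fun a => ins R A (k + 2) a x)]
    simp only [consStep_one_tmul_ins]

end

theorem stmt11_general (R A : Type*) [CommRing R] [Ring A] [Bialgebra R A]
    (c : R) (e f t : A)
    (he : Coalgebra.comul (R := R) e = e ⊗ₜ[R] 1 + 1 ⊗ₜ[R] e)
    (ht : Coalgebra.comul (R := R) t = t ⊗ₜ[R] 1 + 1 ⊗ₜ[R] t - c • (f ⊗ₜ[R] e)) :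
    ∀ k : ℕ,
      iterComul R A k t =
        (∑ a : Fin (k + 1), ins R A (k + 1) a t) -
          c • ∑ p ∈ Finset.univ.filter (fun p : Fin (k + 1) × Fin (k + 1) => p.1 < p.2),
            ins R A (k + 1) p.1 f * ins R A (k + 1) p.2 e := by
  intro k
  induction k with
  | zero => simp [iterComul_zero_apply, Subsingleton.elim _ (0 : Fin 1)]
  | succ k ih =>
    rw [iterComul_succ_apply, ht]
    simp only [map_sub, map_add, map_smul, LinearMap.lTensor_tmul, iterComul_one, ih,
      iterComul_of_comul_eq_primitive he, TensorProduct.tmul_sub, TensorProduct.tmul_smul,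
      TensorProduct.tmul_sum, map_sum, consStep_one_tmul_mul, consStep_one_tmul_ins,
      consStep_tmul_one]
    simp only [consStep_tmul_ins, Fin.sum_univ_succ (f := fun a => ins R A (k + 2) a t),
      Fin.sum_filter_lt_succ k (fun a b => ins R A (k + 2) a f * ins R A (k + 2) b e), smul_add]
    abel

theorem stmt11 (R A : Type*) [CommRing R] [Ring A] [Bialgebra R A]
    (c : R) (e f t : A)
    (he : Coalgebra.comul (R := R) e = e ⊗ₜ[R] 1 + 1 ⊗ₜ[R] e)
    (hf : Coalgebra.comul (R := R) f = f ⊗ₜ[R] 1 + 1 ⊗ₜ[R] f)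
    (ht : Coalgebra.comul (R := R) t = t ⊗ₜ[R] 1 + 1 ⊗ₜ[R] t - c • (f ⊗ₜ[R] e)) :
    ∀ k : ℕ,
      iterComul R A k t =
        (∑ a : Fin (k + 1), ins R A (k + 1) a t) -
          c • ∑ p ∈ Finset.univ.filter (fun p : Fin (k + 1) × Fin (k + 1) => p.1 < p.2),
            ins R A (k + 1) p.1 f * ins R A (k + 1) p.2 e :=
  stmt11_general R A c e f t he ht
end

section
/- Let A be an associative algebra over a field k and let r ∈ A ⊗ A satisfy the classical Yang–Baxter equation [r₁₂, r₂₃] + [r₁₂, r₁₃] + [r₁₃, r₂₃] = 0 in A⊗A⊗A. Define g₊ ⊆ A to be the linear span of { (1 ⊗ f)(r) : f ∈ A* }, i.e. the span of all elements Σᵢ f(bᵢ)·aᵢ where r = Σᵢ aᵢ⊗bᵢ. Then g₊ is closed under the commutator bracket [x,y] = xy − yx, i.e. g₊ is a Lie subalgebra of A. -/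
open scoped TensorProduct

/-- `r₁₂ = Σ aᵢ ⊗ bᵢ ⊗ 1` in `(A ⊗ A) ⊗ A`. -/
noncomputable def r12 {k A : Type*} [Field k] [Ring A] [Algebra k A]
    (r : A ⊗[k] A) : (A ⊗[k] A) ⊗[k] A :=
  r ⊗ₜ[k] (1 : A)

/-- `r₁₃ = Σ aᵢ ⊗ 1 ⊗ bᵢ` in `(A ⊗ A) ⊗ A`. -/
noncomputable def r13 {k A : Type*} [Field k] [Ring A] [Algebra k A]
    (r : A ⊗[k] A) : (A ⊗[k] A) ⊗[k] A :=
  LinearMap.rTensor A (Algebra.TensorProduct.includeLeft (S := k)).toLinearMap r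

/-- `r₂₃ = Σ 1 ⊗ aᵢ ⊗ bᵢ` in `(A ⊗ A) ⊗ A`. -/
noncomputable def r23 {k A : Type*} [Field k] [Ring A] [Algebra k A]
    (r : A ⊗[k] A) : (A ⊗[k] A) ⊗[k] A :=
  LinearMap.rTensor A (Algebra.TensorProduct.includeRight (R := k)).toLinearMap r

/-- `g₊` : the span of the elements `(1 ⊗ f)(r)`, `f ∈ A*`. -/
noncomputable def gPlus {k A : Type*} [Field k] [Ring A] [Algebra k A]
    (r : A ⊗[k] A) : Submodule k A :=
  Submodule.span k
    (Set.range fun f : Module.Dual k A => TensorProduct.rid k A (LinearMap.lTensor A f r))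

/-!
Apply `1 ⊗ f ⊗ g` to the classical Yang–Baxter equation, regrouped as
`[r₁₂, r₁₃] = [r₂₃, r₁₂ + r₁₃]`. The left side becomes `[(1 ⊗ f) r, (1 ⊗ g) r]`. On the right
side the first leg of `r` is never multiplied, so it becomes `(1 ⊗ h) r` for the functional
`h b = (f ⊗ g) [r, b ⊗ 1 + 1 ⊗ b]`. Since `(1 ⊗ f) r` is linear in `f`, `g₊` is exactly the set of
these elements, hence closed under the bracket.
-/

open TensorProduct LinearMap

section Slice

variable {R M N P : Type*} [CommSemiring R] [AddCommMonoid M] [Module R M]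
  [AddCommMonoid N] [Module R N] [AddCommMonoid P] [Module R P]

noncomputable def sliceRight : M ⊗[R] N →ₗ[R] Module.Dual R N →ₗ[R] M :=
  LinearMap.mk₂ R (fun t f => TensorProduct.rid R M (lTensor M f t))
    (by simp) (by simp) (by simp [lTensor_add]) (by simp [lTensor_smul])

@[simp] lemma sliceRight_tmul (m : M) (n : N) (f : Module.Dual R N) :
    sliceRight (m ⊗ₜ[R] n) f = f n • m := by
  simp [sliceRight]

noncomputable def sliceRight₂ (f : Module.Dual R N) (g : Module.Dual R P) :
    (M ⊗[R] N) ⊗[R] P →ₗ[R] M :=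
  (TensorProduct.rid R M).toLinearMap ∘ₗ lTensor M (dualDistrib R N P (f ⊗ₜ g)) ∘ₗ
    (TensorProduct.assoc R M N P).toLinearMap

@[simp] lemma sliceRight₂_tmul (f : Module.Dual R N) (g : Module.Dual R P)
    (m : M) (n : N) (p : P) :
    sliceRight₂ f g ((m ⊗ₜ[R] n) ⊗ₜ[R] p) = (f n * g p) • m := by
  simp [sliceRight₂]

end Slice

section YangBaxter

attribute [local instance] LieRing.ofAssociativeRing

variable {k A : Type*} [Field k] [Ring A] [Algebra k A]

lemma gPlus_eq_range (r : A ⊗[k] A) : gPlus r = range (sliceRight r) :=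
  Submodule.span_eq (range (sliceRight r))

lemma r12_add (s t : A ⊗[k] A) : r12 (s + t) = r12 s + r12 t := add_tmul s t 1

lemma r13_add (s t : A ⊗[k] A) : r13 (s + t) = r13 s + r13 t := map_add _ s t

lemma r23_add (s t : A ⊗[k] A) : r23 (s + t) = r23 s + r23 t := map_add _ s t

lemma sliceRight₂_lie_r12_r13 (f g : Module.Dual k A) (s t : A ⊗[k] A) :
    sliceRight₂ f g ⁅r12 s, r13 t⁆ = ⁅sliceRight s f, sliceRight t g⁆ := by
  induction s using TensorProduct.induction_on with
  | zero => simp [r12]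
  | add s₁ s₂ ih₁ ih₂ => simp only [r12_add, add_lie, map_add, LinearMap.add_apply, ih₁, ih₂]
  | tmul a b =>
    induction t using TensorProduct.induction_on with
    | zero => simp [r13]
    | add t₁ t₂ ih₁ ih₂ => simp only [r13_add, lie_add, map_add, LinearMap.add_apply, ih₁, ih₂]
    | tmul c d =>
      simp [r12, r13, Ring.lie_def, smul_smul, mul_comm (g _) (f _)]

lemma sliceRight₂_lie_r23_r12_add_r13 (f g : Module.Dual k A) (s t : A ⊗[k] A) :
    sliceRight₂ f g ⁅r23 t, r12 s + r13 s⁆ =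
      sliceRight s (dualDistrib k A A (f ⊗ₜ g) ∘ₗ LieAlgebra.ad k (A ⊗[k] A) t ∘ₗ
        (Algebra.TensorProduct.includeLeft.toLinearMap +
          Algebra.TensorProduct.includeRight.toLinearMap)) := by
  induction s using TensorProduct.induction_on with
  | zero => simp [r12, r13]
  | add s₁ s₂ ih₁ ih₂ =>
    rw [r12_add, r13_add, add_add_add_comm, lie_add, map_add, map_add, ih₁, ih₂,
      LinearMap.add_apply]
  | tmul a b =>
    induction t using TensorProduct.induction_on with
    | zero => simp [r23]
    | add t₁ t₂ ih₁ ih₂ =>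
      rw [r23_add, add_lie, map_add, ih₁, ih₂, map_add (LieAlgebra.ad k (A ⊗[k] A)),
        LinearMap.add_comp, LinearMap.comp_add _ _ (dualDistrib k A A (f ⊗ₜ g)), map_add]
    | tmul c d =>
      simp [r12, r13, r23, Ring.lie_def, mul_add, add_mul, add_smul, sub_smul]

end YangBaxter

theorem stmt13 (k A : Type*) [Field k] [Ring A] [Algebra k A] (r : A ⊗[k] A)
    (hr : (r12 r * r23 r - r23 r * r12 r) + (r12 r * r13 r - r13 r * r12 r) +
        (r13 r * r23 r - r23 r * r13 r) = 0) :
    ∀ x ∈ gPlus r, ∀ y ∈ gPlus r, x * y - y * x ∈ gPlus r := by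
  rw [gPlus_eq_range]
  rintro _ ⟨f, rfl⟩ _ ⟨g, rfl⟩
  have hcybe : ⁅r12 r, r13 r⁆ = ⁅r23 r, r12 r + r13 r⁆ := by
    simp only [Ring.lie_def]
    rw [← sub_eq_zero, ← hr]; noncomm_ring
  rw [← Ring.lie_def, ← sliceRight₂_lie_r12_r13, hcybe, sliceRight₂_lie_r23_r12_add_r13]
  exact mem_range_self _ _
end
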